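/- arXiv:1603.02960 — 2 statements merged into one kernel-verified Lean document; each statement's English description precedes it below -/
import Mathlib

section
/- There exists n₀ such that for all n ≥ n₀, m(n+1) ≥ (1 + 1/20)·m(n). -/
namespace ExtremalInducedCycles

/-- The vertex set `s` induces a cycle (of length at least 3) in `G`:
the induced subgraph is connected and 2-regular. -/
def IsInducedCycle {V : Type*} (G : SimpleGraph V) (s : Set V) : Prop :=
  s.Finite ∧ 3 ≤ s.ncard ∧ (G.induce s).Connected ∧
    ∀ v ∈ s, {w | w ∈ s ∧ G.Adj v w}.ncard = 2

/-- `f(G)`: the number of induced cycles in `G`. -/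
noncomputable def numInducedCycles {V : Type*} (G : SimpleGraph V) : ℕ :=
  {s : Set V | IsInducedCycle G s}.ncard

/-- `m(n)`: the maximum number of induced cycles in an `n`-vertex graph. -/
noncomputable def maxInducedCycles (n : ℕ) : ℕ :=
  sSup {k : ℕ | ∃ G : SimpleGraph (Fin n), numInducedCycles G = k}

/-! Blowing up each vertex of a cycle `C_k` into an independent triple gives a graph on `3k`
vertices with `3^k` induced cycles, so `m(n) ≥ 3^(n/3)`. In a graph `H` on `n` vertices, at most
`60^(n/19)` vertex sets have size below `n/19`; when `H` is extremal, these are a negligible part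
of its induced cycles, so averaging over the vertices gives a vertex `v` on at least a twentieth
of them. Adding a twin of `v` (a new vertex with the same neighbourhood) keeps every induced cycle
of `H` and creates a new one from each induced cycle through `v`. -/

open Finset Function SimpleGraph

variable {V W : Type*}

theorem IsInducedCycle.image {G : SimpleGraph V} {G' : SimpleGraph W} (f : G ↪g G')
    {s : Set V} (hs : IsInducedCycle G s) : IsInducedCycle G' (f '' s) := by
  obtain ⟨hfin, hcard, hconn, hdeg⟩ := hs
  refine ⟨hfin.image f, by rwa [Set.ncard_image_of_injective _ f.injective], ?_, ?_⟩
  · have e : G.induce s ≃g G'.induce (f '' s) := ⟨Equiv.Set.image f s f.injective, by simp⟩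
    exact e.connected_iff.mp hconn
  · rintro _ ⟨a, ha, rfl⟩
    have hnbrs : {w | w ∈ f '' s ∧ G'.Adj (f a) w} = f '' {w | w ∈ s ∧ G.Adj a w} := by
      ext w
      constructor
      · rintro ⟨⟨b, hb, rfl⟩, hab⟩
        exact ⟨b, ⟨hb, f.map_adj_iff.mp hab⟩, rfl⟩
      · rintro ⟨b, ⟨hb, hab⟩, rfl⟩
        exact ⟨⟨b, hb, rfl⟩, f.map_adj_iff.mpr hab⟩
    rw [hnbrs, Set.ncard_image_of_injective _ f.injective, hdeg a ha]

theorem numInducedCycles_le_of_embedding [Finite W] {G : SimpleGraph V} {G' : SimpleGraph W}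
    (f : G ↪g G') : numInducedCycles G ≤ numInducedCycles G' :=
  Set.ncard_le_ncard_of_injOn (Set.image f) (fun _ hs => hs.image f)
    (Set.image_injective.mpr f.injective).injOn (Set.toFinite _)

theorem bddAbove_numInducedCycles_range (n : ℕ) :
    BddAbove {k : ℕ | ∃ G : SimpleGraph (Fin n), numInducedCycles G = k} := by
  refine ⟨Nat.card (Set (Fin n)), ?_⟩
  rintro _ ⟨G, rfl⟩
  exact (Set.ncard_le_ncard (Set.subset_univ _)).trans (Set.ncard_univ _).le

theorem exists_numInducedCycles_eq_maxInducedCycles (n : ℕ) :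
    ∃ G : SimpleGraph (Fin n), numInducedCycles G = maxInducedCycles n :=
  Nat.sSup_mem (s := {k | ∃ G : SimpleGraph (Fin n), numInducedCycles G = k}) ⟨_, ⊥, rfl⟩
    (bddAbove_numInducedCycles_range n)

theorem numInducedCycles_le_maxInducedCycles [Fintype V] {n : ℕ} (G : SimpleGraph V)
    (hV : Fintype.card V ≤ n) : numInducedCycles G ≤ maxInducedCycles n := by
  obtain ⟨e⟩ := Function.Embedding.nonempty_of_card_le (hV.trans (Fintype.card_fin n).ge)
  exact (numInducedCycles_le_of_embedding (Embedding.map e G)).trans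
    (le_csSup (bddAbove_numInducedCycles_range n) ⟨_, rfl⟩)

/-- `G.comap g` is the blow-up of `G` replacing each vertex `v` by the independent set
`g ⁻¹' {v}`. -/
def embeddingComapOfLeftInverse (G : SimpleGraph V) {g : W → V} {σ : V → W}
    (h : LeftInverse g σ) : G ↪g G.comap g where
  toFun := σ
  inj' := h.injective
  map_rel_iff' {a b} := by simp [h a, h b]

theorem isInducedCycle_univ_cycleGraph (k : ℕ) :
    IsInducedCycle (cycleGraph (k + 3)) Set.univ := by
  refine ⟨Set.finite_univ, by simp, ?_, fun v _ => ?_⟩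
  · exact (induceUnivIso _).connected_iff.mpr cycleGraph_connected
  · rw [← cycleGraph_degree_three_le (v := v), ← card_neighborSet_eq_degree,
      ← Nat.card_eq_fintype_card, Nat.card_coe_set_eq]
    simp [neighborSet]

theorem pow_card_le_numInducedCycles_comap_fst {ι : Type*} [Finite V] [Finite ι]
    {G : SimpleGraph V} (hG : IsInducedCycle G Set.univ) :
    Nat.card ι ^ Nat.card V ≤ numInducedCycles (G.comap (Prod.fst : V × ι → V)) := by
  rw [← Nat.card_fun, ← Set.ncard_univ]
  refine Set.ncard_le_ncard_of_injOn (fun c => Set.range fun v => (v, c v)) (fun c _ => ?_)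
    (fun c _ c' _ h => funext fun v => ?_) (Set.toFinite _)
  · have hsection : LeftInverse (Prod.fst : V × ι → V) fun v => (v, c v) := fun _ => rfl
    have := hG.image (embeddingComapOfLeftInverse G hsection)
    rwa [Set.image_univ] at this
  · obtain ⟨w, hw⟩ : (v, c v) ∈ Set.range fun v => (v, c' v) := by
      simp only at h
      exact h ▸ ⟨v, rfl⟩
    simp only [Prod.mk.injEq] at hw
    rw [← hw.2, hw.1]

theorem three_pow_le_maxInducedCycles {n : ℕ} (hn : 9 ≤ n) :
    3 ^ (n / 3) ≤ maxInducedCycles n := by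
  obtain ⟨k, hk⟩ : ∃ k, n / 3 = k + 3 := ⟨n / 3 - 3, by omega⟩
  have hcycles := pow_card_le_numInducedCycles_comap_fst (ι := Fin 3)
    (isInducedCycle_univ_cycleGraph k)
  simp only [Nat.card_eq_fintype_card, Fintype.card_fin] at hcycles
  refine hk ▸ hcycles.trans (numInducedCycles_le_maxInducedCycles _ ?_)
  simp only [Fintype.card_prod, Fintype.card_fin]
  omega

theorem numInducedCycles_add_ncard_le_comap_getD [Finite V] (G : SimpleGraph V) (v : V) :
    numInducedCycles G + {s | IsInducedCycle G s ∧ v ∈ s}.ncard ≤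
      numInducedCycles (G.comap fun o : Option V => o.getD v) := by
  classical
  let σ : V → Option V := fun a => if a = v then none else some a
  have hσ : LeftInverse (fun o : Option V => o.getD v) σ := fun a => by
    by_cases ha : a = v <;> simp [σ, ha]
  have hsome : LeftInverse (fun o : Option V => o.getD v) some := fun _ => rfl
  let A := Set.image some '' {s | IsInducedCycle G s}
  let B := Set.image σ '' {s | IsInducedCycle G s ∧ v ∈ s}
  have hdisj : Disjoint A B := by
    refine Set.disjoint_left.mpr ?_
    rintro _ ⟨s, -, rfl⟩ ⟨t, ⟨-, hvt⟩, hts⟩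
    obtain ⟨a, -, ha⟩ : none ∈ Set.image some s := hts ▸ ⟨v, hvt, by simp [σ]⟩
    exact Option.some_ne_none a ha
  calc numInducedCycles G + {s | IsInducedCycle G s ∧ v ∈ s}.ncard = A.ncard + B.ncard := by
        rw [Set.ncard_image_of_injective _ (Set.image_injective.mpr (Option.some_injective V)),
          Set.ncard_image_of_injective _ (Set.image_injective.mpr hσ.injective)]
        rfl
    _ = (A ∪ B).ncard := (Set.ncard_union_eq hdisj).symm
    _ ≤ _ := by
      refine Set.ncard_le_ncard ?_ (Set.toFinite _)
      rintro _ (⟨s, hs, rfl⟩ | ⟨s, ⟨hs, -⟩, rfl⟩)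
      · exact hs.image (embeddingComapOfLeftInverse G hsome)
      · exact hs.image (embeddingComapOfLeftInverse G hσ)

theorem mul_card_filter_le_sum_card (ℬ : Finset (Finset V)) (t : ℕ) :
    t * #{s ∈ ℬ | t ≤ #s} ≤ ∑ s ∈ ℬ, #s :=
  calc t * #{s ∈ ℬ | t ≤ #s} = #{s ∈ ℬ | t ≤ #s} • t := by rw [smul_eq_mul, mul_comm]
    _ ≤ ∑ s ∈ ℬ with t ≤ #s, #s := card_nsmul_le_sum _ _ _ fun s hs => (mem_filter.mp hs).2
    _ ≤ ∑ s ∈ ℬ, #s := sum_le_sum_of_subset (filter_subset _ _)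

open Nat in
theorem sum_range_choose_le_exp_mul_pow {n t : ℕ} (ht : 0 < t) (htn : t ≤ n) :
    ∑ k ∈ range t, (n.choose k : ℝ) ≤ (Real.exp 1 * n / t) ^ t := by
  have ht' : (0 : ℝ) < t := by exact_mod_cast ht
  have hnt : 1 ≤ (n / t : ℝ) := (one_le_div ht').mpr (by exact_mod_cast htn)
  calc ∑ k ∈ range t, (n.choose k : ℝ) ≤ ∑ k ∈ range t, (n / t : ℝ) ^ t * (t ^ k / k !) := by
        gcongr with k hk
        calc (n.choose k : ℝ) ≤ n ^ k / k ! := choose_le_pow_div k n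
          _ = (n / t : ℝ) ^ k * (t ^ k / k !) := by
            rw [← mul_div_assoc, ← mul_pow, div_mul_cancel₀ _ ht'.ne']
          _ ≤ (n / t : ℝ) ^ t * (t ^ k / k !) := by
            gcongr
            exact (mem_range.mp hk).le
    _ = (n / t : ℝ) ^ t * ∑ k ∈ range t, (t : ℝ) ^ k / k ! := (mul_sum _ _ _).symm
    _ ≤ (n / t : ℝ) ^ t * Real.exp t := by
        gcongr
        exact Real.sum_le_exp_of_nonneg ht'.le t
    _ = (Real.exp 1 * n / t) ^ t := by rw [← Real.exp_one_pow]; ring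

section SetFamily

variable [Fintype V]

theorem exists_sum_card_le_card_mul_card_filter_mem [DecidableEq V] [Nonempty V]
    (ℬ : Finset (Finset V)) : ∃ v, ∑ s ∈ ℬ, #s ≤ Fintype.card V * #{s ∈ ℬ | v ∈ s} := by
  obtain ⟨v, -, hv⟩ := exists_max_image univ (fun v => #{s ∈ ℬ | v ∈ s}) univ_nonempty
  exact ⟨v, by simpa using sum_card_inter_le (s := univ) (B := ℬ) fun a _ => hv a (mem_univ a)⟩

theorem card_filter_card_lt_le_sum_choose [DecidableEq V] (ℬ : Finset (Finset V)) (t : ℕ) :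
    #{s ∈ ℬ | #s < t} ≤ ∑ k ∈ range t, (Fintype.card V).choose k :=
  calc #{s ∈ ℬ | #s < t} ≤ #((range t).biUnion fun k => powersetCard k univ) :=
        card_le_card fun s hs => by simpa using (mem_filter.mp hs).2
    _ ≤ ∑ k ∈ range t, #(powersetCard k (univ : Finset V)) := card_biUnion_le
    _ = ∑ k ∈ range t, (Fintype.card V).choose k := by simp only [card_powersetCard, card_univ]

theorem ncard_setOf_eq_card_filter (P : Set V → Prop) [DecidablePred P] :
    {s : Set V | P s}.ncard = #{s : Finset V | P s} := by
  rw [← Set.ncard_coe_finset, ← Set.ncard_image_of_injective _ Finset.coe_injective]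
  congr 1
  ext s
  simp only [Set.mem_ofPred_eq, coe_filter, mem_univ, true_and, Set.mem_image]
  exact ⟨fun hs => ⟨s.toFinite.toFinset, by simpa using hs, by simp⟩, fun ⟨_, hs, h⟩ => h ▸ hs⟩

theorem exists_card_le_twenty_mul_card_filter_mem [DecidableEq V]
    (hV : 722 ≤ Fintype.card V) (ℬ : Finset (Finset V))
    (hℬ : 3 ^ (Fintype.card V / 3) ≤ #ℬ) : ∃ v, #ℬ ≤ 20 * #{s ∈ ℬ | v ∈ s} := by
  set n := Fintype.card V
  -- `n ≤ 20 t`, so at most `60 ^ t` sets are shorter than `t`, against `3 ^ (n / 3) ≥ 729 ^ t`;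
  -- and `2 n ≤ 39 t`, so the long sets alone force a vertex into a twentieth of `ℬ`.
  set t := n / 19
  have : Nonempty V := Fintype.card_pos_iff.mp (by omega)
  obtain ⟨v, hv⟩ := exists_sum_card_le_card_mul_card_filter_mem ℬ
  have hlong : t * #{s ∈ ℬ | t ≤ #s} ≤ n * #{s ∈ ℬ | v ∈ s} :=
    (mul_card_filter_le_sum_card ℬ t).trans hv
  have hshort : 40 * #{s ∈ ℬ | #s < t} ≤ #ℬ := by
    have hreal : (#{s ∈ ℬ | #s < t} : ℝ) ≤ 60 ^ t :=
      calc (#{s ∈ ℬ | #s < t} : ℝ) ≤ ∑ k ∈ range t, (n.choose k : ℝ) := by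
            exact_mod_cast card_filter_card_lt_le_sum_choose ℬ t
        _ ≤ (Real.exp 1 * n / t) ^ t := sum_range_choose_le_exp_mul_pow (by omega) (by omega)
        _ ≤ 60 ^ t := by
          have he : Real.exp 1 ≤ 3 := Real.exp_one_lt_d9.le.trans (by norm_num)
          have hn : (n : ℝ) ≤ 20 * t := by exact_mod_cast (by omega : n ≤ 20 * t)
          have ht : (0 : ℝ) < t := by exact_mod_cast (by omega : 0 < t)
          gcongr
          rw [div_le_iff₀ ht]
          nlinarith [Real.exp_pos 1]
    have hpow : 40 * 60 ^ t ≤ 729 ^ t := by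
      obtain ⟨r, hr⟩ : ∃ r, t = r + 2 := ⟨t - 2, by omega⟩
      have := Nat.pow_le_pow_left (show 60 ≤ 729 by norm_num) r
      rw [hr, pow_add, pow_add]
      omega
    calc 40 * #{s ∈ ℬ | #s < t} ≤ 40 * 60 ^ t := by gcongr; exact_mod_cast hreal
      _ ≤ 3 ^ (6 * t) := by rw [pow_mul]; exact hpow
      _ ≤ 3 ^ (n / 3) := Nat.pow_le_pow_right (by norm_num) (by omega)
      _ ≤ #ℬ := hℬ
  set E := #{s ∈ ℬ | #s < t}
  set L := #{s ∈ ℬ | t ≤ #s}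
  have hsplit : L + E = #ℬ := by
    simpa only [not_le] using card_filter_add_card_filter_not (s := ℬ) (fun s => t ≤ #s)
  refine ⟨v, Nat.le_of_mul_le_mul_left (c := 2 * n) ?_ (by omega)⟩
  calc 2 * n * #ℬ ≤ 39 * t * (L + E) := by rw [hsplit]; exact Nat.mul_le_mul_right _ (by omega)
    _ ≤ 40 * (t * L) := by nlinarith
    _ ≤ 40 * (n * #{s ∈ ℬ | v ∈ s}) := by gcongr
    _ = 2 * n * (20 * #{s ∈ ℬ | v ∈ s}) := by ring

end SetFamily

/-- Lemma: `m(n+1) ≥ (1 + 1/20)·m(n)` for all sufficiently large `n`. -/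
theorem maxInducedCycles_succ_ge :
    ∃ n₀ : ℕ, ∀ n : ℕ, n₀ ≤ n →
      (1 + 1 / 20 : ℝ) * (maxInducedCycles n : ℝ) ≤ (maxInducedCycles (n + 1) : ℝ) := by
  classical
  refine ⟨722, fun n hn => ?_⟩
  obtain ⟨H, hH⟩ := exists_numInducedCycles_eq_maxInducedCycles n
  set 𝒞 : Finset (Finset (Fin n)) := {s | IsInducedCycle H s}
  have hcard : maxInducedCycles n = #𝒞 := hH ▸ ncard_setOf_eq_card_filter _
  obtain ⟨v, hv⟩ : ∃ v, #𝒞 ≤ 20 * #{s ∈ 𝒞 | v ∈ s} :=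
    exists_card_le_twenty_mul_card_filter_mem (by simpa using hn) 𝒞
      (by simpa [← hcard] using three_pow_le_maxInducedCycles (by omega : 9 ≤ n))
  have hthrough : {s | IsInducedCycle H s ∧ v ∈ s}.ncard = #{s ∈ 𝒞 | v ∈ s} := by
    simpa [𝒞, filter_filter] using
      ncard_setOf_eq_card_filter fun s => IsInducedCycle H s ∧ v ∈ s
  have hclone : maxInducedCycles n + #{s ∈ 𝒞 | v ∈ s} ≤ maxInducedCycles (n + 1) := by
    rw [← hH, ← hthrough]
    exact (numInducedCycles_add_ncard_le_comap_getD H v).trans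
      (numInducedCycles_le_maxInducedCycles _ (by simp))
  rw [← hcard] at hv
  have hv' : (maxInducedCycles n : ℝ) ≤ 20 * #{s ∈ 𝒞 | v ∈ s} := by exact_mod_cast hv
  have hclone' : (maxInducedCycles n + #{s ∈ 𝒞 | v ∈ s} : ℝ) ≤ maxInducedCycles (n + 1) := by
    exact_mod_cast hclone
  linarith

end ExtremalInducedCycles
end

section
/- There exist positive constants c, C and n₀ such that for all n ≥ n₀, c·3^{n/3} ≤ m(n) ≤ C·3^{n/3}; that is, m(n) = Θ(3^{n/3}). -/
/-!
Upper bound. Let `P(m)` bound the number of induced paths from `a` to `b` whose vertices other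
than `a` lie in a set `A` of size `m`. Such a path is either the edge `ab`, or it continues from
the unique neighbour `u` of `a` on it with a path whose vertices other than `u` avoid `N[a]`;
if `a` has `d` neighbours in `A` this gives `P(m) ≤ 1 + d P(m - d)`, and `P(m) ≤ 4·3^{m/3} - 1`.
An induced cycle inside `A` either avoids a given vertex `v`, or it is `v` together with an
induced path between two neighbours of `v` that avoids the other neighbours of `v`. Hence
`C(m) ≤ C(m - 1) + d² P(m - d)`, and `d² ≤ 5·3^{d/3}` gives `C(m) ≤ 128·3^{m/3}`.

Lower bound. In the `k`-cycle whose vertices are blown up into independent triples, each of the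
`3^k` ways of choosing one vertex from every triple spans an induced cycle.
-/

namespace ExtremalInducedCycles

open SimpleGraph

noncomputable def cubeRootThree : ℝ := 3 ^ (1 / 3 : ℝ)

lemma cubeRootThree_pos : 0 < cubeRootThree := by unfold cubeRootThree; positivity

lemma cubeRootThree_pow_three : cubeRootThree ^ 3 = 3 := by
  rw [cubeRootThree, ← Real.rpow_mul_natCast (by norm_num)]
  norm_num

lemma rpow_div_three_eq_cubeRootThree_pow (n : ℕ) :
    (3 : ℝ) ^ ((n : ℝ) / 3) = cubeRootThree ^ n := by
  rw [cubeRootThree, ← Real.rpow_mul_natCast (by norm_num)]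
  ring_nf

lemma five_div_four_le_cubeRootThree : 5 / 4 ≤ cubeRootThree :=
  le_of_pow_le_pow_left₀ three_ne_zero cubeRootThree_pos.le
    (by rw [cubeRootThree_pow_three]; norm_num)

lemma one_le_cubeRootThree_pow (n : ℕ) : 1 ≤ cubeRootThree ^ n :=
  one_le_pow₀ (by linarith [five_div_four_le_cubeRootThree])

lemma cubeRootThree_pow_mono {m n : ℕ} (h : m ≤ n) : cubeRootThree ^ m ≤ cubeRootThree ^ n :=
  pow_le_pow_right₀ (by linarith [five_div_four_le_cubeRootThree]) h

lemma cube_le_three_pow (d : ℕ) : d ^ 3 ≤ 3 ^ d := by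
  induction d with
  | zero => norm_num
  | succ n ih =>
    rcases Nat.lt_or_ge n 3 with h | h
    · interval_cases n <;> norm_num
    · have : 27 * (n + 1) ^ 3 ≤ 64 * n ^ 3 := by
        have := Nat.pow_le_pow_left (show 3 * (n + 1) ≤ 4 * n by omega) 3
        rw [mul_pow, mul_pow] at this
        norm_num at this
        exact this
      rw [pow_succ 3 n]
      omega

lemma pow_six_le_three_pow (d : ℕ) : d ^ 6 ≤ 125 * 3 ^ d := by
  induction d with
  | zero => norm_num
  | succ n ih =>
    rcases Nat.lt_or_ge n 5 with h | h
    · interval_cases n <;> norm_num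
    · have : 15625 * (n + 1) ^ 6 ≤ 46656 * n ^ 6 := by
        have := Nat.pow_le_pow_left (show 5 * (n + 1) ≤ 6 * n by omega) 6
        rw [mul_pow, mul_pow] at this
        norm_num at this
        exact this
      rw [pow_succ 3 n]
      omega

lemma cubeRootThree_pow_pow_three (d : ℕ) : (cubeRootThree ^ d) ^ 3 = 3 ^ d := by
  rw [← pow_mul, mul_comm, pow_mul, cubeRootThree_pow_three]

lemma natCast_le_cubeRootThree_pow (d : ℕ) : (d : ℝ) ≤ cubeRootThree ^ d := by
  refine le_of_pow_le_pow_left₀ three_ne_zero (by positivity [cubeRootThree_pos]) ?_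
  rw [cubeRootThree_pow_pow_three]
  exact_mod_cast cube_le_three_pow d

lemma natCast_sq_le_cubeRootThree_pow (d : ℕ) : (d : ℝ) ^ 2 ≤ 5 * cubeRootThree ^ d := by
  have := cubeRootThree_pos
  refine le_of_pow_le_pow_left₀ three_ne_zero (by positivity) ?_
  rw [mul_pow, cubeRootThree_pow_pow_three, ← pow_mul]
  exact_mod_cast pow_six_le_three_pow d

lemma cubeRootThree_pow_le (n : ℕ) : cubeRootThree ^ n ≤ 3 * 3 ^ (n / 3) := by
  have hr := five_div_four_le_cubeRootThree
  have hmod : cubeRootThree ^ (n % 3) ≤ 3 := by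
    rw [← cubeRootThree_pow_three]
    exact cubeRootThree_pow_mono (Nat.mod_lt n three_pos).le
  calc cubeRootThree ^ n = cubeRootThree ^ (n % 3) * 3 ^ (n / 3) := by
        rw [← cubeRootThree_pow_three, ← pow_mul, ← pow_add, Nat.mod_add_div]
    _ ≤ 3 * 3 ^ (n / 3) := by gcongr

lemma inducedPaths_recursion_bound (d k : ℕ) :
    1 + d * (4 * cubeRootThree ^ k - 1) ≤ 4 * cubeRootThree ^ (d + k) - 1 := by
  have hr := five_div_four_le_cubeRootThree
  have hk := one_le_cubeRootThree_pow k
  rw [pow_add]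
  rcases Nat.lt_or_ge d 2 with hd | hd
  · interval_cases d <;> norm_num <;> nlinarith
  · have hd' : (2 : ℝ) ≤ d := by exact_mod_cast hd
    nlinarith [natCast_le_cubeRootThree_pow d]

lemma inducedCycles_recursion_bound (d k : ℕ) :
    128 * (cubeRootThree ^ (d + k) - 1) + d * (d * (4 * cubeRootThree ^ (k + 1))) ≤
      128 * (cubeRootThree ^ (d + k + 1) - 1) := by
  have hr := five_div_four_le_cubeRootThree
  have hk := one_le_cubeRootThree_pow k
  have hd := natCast_sq_le_cubeRootThree_pow d
  have hpos : 0 ≤ cubeRootThree ^ d * cubeRootThree ^ k := by positivity [cubeRootThree_pos]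
  rw [pow_succ, pow_succ, pow_add]
  nlinarith [mul_le_mul_of_nonneg_right hd
      (by positivity : 0 ≤ cubeRootThree ^ k * cubeRootThree),
    mul_nonneg hpos (by linarith : 0 ≤ 108 * cubeRootThree - 128)]

variable {V : Type*} {G : SimpleGraph V} {s t : Set V} {a b u v x y : V}

def ReachableIn (G : SimpleGraph V) (s : Set V) (x y : V) : Prop :=
  ∃ p : G.Walk x y, ∀ z ∈ p.support, z ∈ s

namespace ReachableIn

lemma refl (hx : x ∈ s) : ReachableIn G s x x := ⟨.nil, by simpa using hx⟩

lemma symm (h : ReachableIn G s x y) : ReachableIn G s y x :=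
  let ⟨p, hp⟩ := h; ⟨p.reverse, by simpa using hp⟩

lemma trans (h : ReachableIn G s x y) (h' : ReachableIn G s y u) : ReachableIn G s x u :=
  let ⟨p, hp⟩ := h; let ⟨q, hq⟩ := h'
  ⟨p.append q, fun z hz => (Walk.mem_support_append_iff p q).1 hz |>.elim (hp z) (hq z)⟩

lemma cons (hxy : G.Adj x y) (hx : x ∈ s) (h : ReachableIn G s y u) : ReachableIn G s x u :=
  let ⟨p, hp⟩ := h; ⟨.cons hxy p, by simpa [hx] using hp⟩

lemma right_mem (h : ReachableIn G s x y) : y ∈ s :=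
  let ⟨p, hp⟩ := h; hp y p.end_mem_support

lemma of_connected_induce (h : (G.induce s).Connected) (hx : x ∈ s) (hy : y ∈ s) :
    ReachableIn G s x y :=
  let ⟨p⟩ := h.preconnected ⟨x, hx⟩ ⟨y, hy⟩
  ⟨p.map (Embedding.induce s).toHom, fun z hz => by
    obtain ⟨w, -, rfl⟩ := List.mem_map.1 ((Walk.support_map _ p) ▸ hz)
    exact w.2⟩

lemma sdiff_singleton_or (h : ReachableIn G s x y) (hx : x ≠ a) :
    ReachableIn G (s \ {a}) x y ∨
      ∃ w ∈ s ∩ G.neighborSet a, ReachableIn G (s \ {a}) x w := by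
  obtain ⟨p, hp⟩ := h
  induction p with
  | nil => exact .inl (refl ⟨hp _ (by simp), hx⟩)
  | @cons x z y hxz p ih =>
    have hxs : x ∈ s \ {a} := ⟨hp x (by simp), hx⟩
    by_cases hza : z = a
    · subst hza
      exact .inr ⟨x, ⟨hxs.1, hxz.symm⟩, refl hxs⟩
    · rcases ih hza (fun w hw => hp w (by simp [hw])) with h | ⟨w, hw, h⟩
      · exact .inl (h.cons hxz hxs)
      · exact .inr ⟨w, hw, h.cons hxz hxs⟩

lemma sdiff_singleton (h : ReachableIn G s x y) (hx : x ≠ a) (hy : y ≠ a)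
    (ha : (s ∩ G.neighborSet a).Subsingleton) : ReachableIn G (s \ {a}) x y := by
  rcases h.sdiff_singleton_or hx with h | ⟨w, hw, hxw⟩
  · exact h
  rcases h.symm.sdiff_singleton_or hy with h | ⟨w', hw', hyw'⟩
  · exact h.symm
  · exact hxw.trans (ha hw hw' ▸ hyw'.symm)

lemma mem_of_closed {S : Set V} (h : ReachableIn G s x y) (hx : x ∈ S)
    (hS : ∀ z ∈ S, ∀ w ∈ s, G.Adj z w → w ∈ S) : y ∈ S := by
  obtain ⟨p, hp⟩ := h
  induction p with
  | nil => exact hx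
  | @cons x z y hxz p ih =>
    exact ih (hS x hx z (hp z (by simp)) hxz) (fun w hw => hp w (by simp [hw]))

end ReachableIn

lemma sdiff_singleton_inter_neighborSet_of_not_adj (h : ¬G.Adj x a) :
    (s \ {a}) ∩ G.neighborSet x = s ∩ G.neighborSet x := by
  ext w
  simp only [Set.mem_inter_iff, Set.mem_sdiff, Set.mem_singleton_iff, mem_neighborSet]
  exact ⟨fun h => ⟨h.1.1, h.2⟩, fun ⟨hw, hxw⟩ => ⟨⟨hw, by rintro rfl; exact h hxw⟩, hxw⟩⟩

lemma ncard_sdiff_singleton_inter_neighborSet_of_adj (ha : a ∈ s) (h : G.Adj x a) :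
    ((s \ {a}) ∩ G.neighborSet x).ncard = (s ∩ G.neighborSet x).ncard - 1 := by
  rw [← Set.inter_sdiff_right_comm,
    Set.ncard_sdiff_singleton_of_mem (s := s ∩ G.neighborSet x) ⟨ha, h⟩]

lemma ncard_inter_neighborSet_eq_degree_induce [Fintype s] [DecidableRel (G.induce s).Adj]
    (x : s) : (s ∩ G.neighborSet x).ncard = (G.induce s).degree x := by
  have : s ∩ G.neighborSet x = Subtype.val '' (G.induce s).neighborSet x := by
    ext w
    simp [and_comm]
  rw [this, Set.ncard_image_of_injective _ Subtype.val_injective, Set.ncard_eq_toFinset_card',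
    ← card_neighborSet_eq_degree, Set.toFinset_card]

lemma exists_ne_odd_ncard_inter_neighborSet (hs : s.Finite) (hu : u ∈ s)
    (hodd : Odd (s ∩ G.neighborSet u).ncard) :
    ∃ w ∈ s, w ≠ u ∧ Odd (s ∩ G.neighborSet w).ncard := by
  classical
  have := hs.fintype
  rw [ncard_inter_neighborSet_eq_degree_induce ⟨u, hu⟩] at hodd
  obtain ⟨w, hwu, hw⟩ := (G.induce s).exists_ne_odd_degree_of_exists_odd_degree _ hodd
  refine ⟨w, w.2, fun h => hwu (Subtype.ext h), ?_⟩
  rwa [ncard_inter_neighborSet_eq_degree_induce w]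

lemma exists_reachableIn_odd (hs : s.Finite) (hu : u ∈ s)
    (hodd : Odd (s ∩ G.neighborSet u).ncard) :
    ∃ w ∈ s, w ≠ u ∧ Odd (s ∩ G.neighborSet w).ncard ∧ ReachableIn G s u w := by
  set U := {x | ReachableIn G s u x}
  have hUs : U ⊆ s := fun x hx => hx.right_mem
  have hU : ∀ x ∈ U, U ∩ G.neighborSet x = s ∩ G.neighborSet x := by
    refine fun x hx => Set.Subset.antisymm (Set.inter_subset_inter_left _ hUs) ?_
    exact fun w ⟨hw, hxw⟩ => ⟨hx.trans ((ReachableIn.refl hw).cons hxw hx.right_mem), hxw⟩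
  have huU : u ∈ U := ReachableIn.refl hu
  obtain ⟨w, hw, hwu, hodd⟩ :=
    exists_ne_odd_ncard_inter_neighborSet (hs.subset hUs) huU (by rwa [hU u huU])
  exact ⟨w, hUs hw, hwu, by rwa [← hU w hw], hw⟩

structure IsInducedPath (G : SimpleGraph V) (t : Set V) (a b : V) : Prop where
  left_mem : a ∈ t
  right_mem : b ∈ t
  ne : a ≠ b
  reachableIn : ∀ x ∈ t, ReachableIn G t a x
  ncard_left : (t ∩ G.neighborSet a).ncard = 1
  ncard_right : (t ∩ G.neighborSet b).ncard = 1
  ncard_of_ne : ∀ x ∈ t, x ≠ a → x ≠ b → (t ∩ G.neighborSet x).ncard = 2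

lemma IsInducedPath.exists_isInducedPath_sdiff_singleton (h : IsInducedPath G t a b)
    (ht : t ≠ {a, b}) : ∃ u, t ∩ G.neighborSet a = {u} ∧ IsInducedPath G (t \ {a}) u b := by
  obtain ⟨u, hu⟩ := Set.ncard_eq_one.1 h.ncard_left
  have hnbr : ∀ x ∈ t, G.Adj a x → x = u := fun x hx hax =>
    (hu ▸ ⟨hx, hax⟩ : x ∈ ({u} : Set V))
  have hut : u ∈ t ∩ G.neighborSet a := hu ▸ rfl
  have hua : u ≠ a := hut.2.ne.symm
  -- otherwise `{a, b}` would be a connected component of `t`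
  have hub : u ≠ b := by
    rintro rfl
    obtain ⟨c, hc⟩ := Set.ncard_eq_one.1 h.ncard_right
    have hnbr' : ∀ x ∈ t, G.Adj u x → x = a := fun x hx hux =>
      (hc ▸ ⟨hx, hux⟩ : x ∈ ({c} : Set V)).trans
        (hc ▸ ⟨h.left_mem, hut.2.symm⟩ : a ∈ ({c} : Set V)).symm
    refine ht (Set.Subset.antisymm
      (fun x hx => (h.reachableIn x hx).mem_of_closed (by simp) ?_)
      (Set.insert_subset h.left_mem (Set.singleton_subset_iff.2 hut.1)))
    rintro z (rfl | rfl) w hw hzw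
    · simp [hnbr w hw hzw]
    · simp [hnbr' w hw hzw]
  refine ⟨u, hu, ⟨hut.1, hua⟩, ⟨h.right_mem, h.ne.symm⟩, hub, ?_, ?_, ?_, ?_⟩
  · rintro x ⟨hx, hxa⟩
    exact ((h.reachableIn u hut.1).symm.trans (h.reachableIn x hx)).sdiff_singleton hua hxa
      (hu ▸ Set.subsingleton_singleton)
  · rw [ncard_sdiff_singleton_inter_neighborSet_of_adj h.left_mem hut.2.symm,
      h.ncard_of_ne u hut.1 hua hub]
  · rw [sdiff_singleton_inter_neighborSet_of_not_adj
      fun hba => hub (hnbr b h.right_mem hba.symm).symm, h.ncard_right]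
  · rintro x ⟨hx, hxa⟩ hxu hxb
    rw [sdiff_singleton_inter_neighborSet_of_not_adj fun hxa' => hxu (hnbr x hx hxa'.symm),
      h.ncard_of_ne x hx hxa hxb]

lemma IsInducedCycle.exists_isInducedPath_sdiff_singleton (h : IsInducedCycle G s)
    (hv : v ∈ s) : ∃ u u', s ∩ G.neighborSet v = {u, u'} ∧ IsInducedPath G (s \ {v}) u u' := by
  obtain ⟨hfin, -, hconn, hdeg⟩ := h
  replace hdeg : ∀ x ∈ s, (s ∩ G.neighborSet x).ncard = 2 := hdeg
  obtain ⟨u, u', huu', hN⟩ := Set.ncard_eq_two.1 (hdeg v hv)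
  have hmem : ∀ {x}, x ∈ s ∩ G.neighborSet v ↔ x = u ∨ x = u' := by simp [hN]
  have hu : u ∈ s ∩ G.neighborSet v := hmem.2 (.inl rfl)
  have hu' : u' ∈ s ∩ G.neighborSet v := hmem.2 (.inr rfl)
  have hdeg_end : ∀ {x}, x ∈ s ∩ G.neighborSet v → ((s \ {v}) ∩ G.neighborSet x).ncard = 1 :=
    fun hx => by rw [ncard_sdiff_singleton_inter_neighborSet_of_adj hv hx.2.symm, hdeg _ hx.1]
  have hdeg_int :
      ∀ x ∈ s \ {v}, x ≠ u → x ≠ u' → ((s \ {v}) ∩ G.neighborSet x).ncard = 2 := by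
    intro x hx hxu hxu'
    rw [sdiff_singleton_inter_neighborSet_of_not_adj fun hxv =>
      (hmem.1 ⟨hx.1, hxv.symm⟩).elim hxu hxu', hdeg x hx.1]
  have hne : ∀ {x}, x ∈ s ∩ G.neighborSet v → x ∈ s \ {v} := fun hx => ⟨hx.1, hx.2.ne.symm⟩
  -- `u` and `u'` are the only vertices of odd degree in `s \ {v}`
  have huu'_reach : ReachableIn G (s \ {v}) u u' := by
    obtain ⟨w, hw, hwu, hodd, hreach⟩ :=
      exists_reachableIn_odd hfin.sdiff (hne hu) (by rw [hdeg_end hu]; exact odd_one)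
    by_cases hwu' : w = u'
    · exact hwu' ▸ hreach
    · rw [hdeg_int w hw hwu hwu'] at hodd
      exact absurd hodd (by decide)
  have hreach : ∀ x ∈ s \ {v}, ReachableIn G (s \ {v}) u x := by
    rintro x ⟨hx, hxv⟩
    rcases (ReachableIn.of_connected_induce hconn hx hv).sdiff_singleton_or hxv
      with h | ⟨w, hw, hxw⟩
    · exact absurd h.right_mem (by simp)
    · rcases hmem.1 hw with rfl | rfl
      · exact hxw.symm
      · exact huu'_reach.trans hxw.symm
  exact ⟨u, u', hN, hne hu, hne hu', huu', hreach, hdeg_end hu, hdeg_end hu', hdeg_int⟩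

lemma ncard_biUnion_le_mul {ι α : Type*} {P : Set ι} (hP : P.Finite) {f : ι → Set α} {M : ℝ}
    (hf : ∀ i ∈ P, ((f i).ncard : ℝ) ≤ M) : ((⋃ i ∈ P, f i).ncard : ℝ) ≤ P.ncard * M := by
  induction P, hP using Set.Finite.induction_on with
  | empty => simp
  | @insert i P hiP hP ih =>
    rw [Set.biUnion_insert, Set.ncard_insert_of_notMem hiP hP]
    calc ((f i ∪ ⋃ j ∈ P, f j).ncard : ℝ) ≤ (f i).ncard + (⋃ j ∈ P, f j).ncard := by
          exact_mod_cast Set.ncard_union_le _ _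
      _ ≤ M + P.ncard * M :=
          add_le_add (hf i (Set.mem_insert i P)) (ih fun j hj => hf j (.inr hj))
      _ = ((P.ncard + 1 : ℕ) : ℝ) * M := by push_cast; ring

lemma ncard_le_of_subset_union {α : Type*} [Finite α] {S T U : Set α} (h : S ⊆ T ∪ U) :
    (S.ncard : ℝ) ≤ T.ncard + U.ncard := by
  exact_mod_cast (Set.ncard_le_ncard h).trans (Set.ncard_union_le T U)

def inducedPathsIn (G : SimpleGraph V) (A : Set V) (a b : V) : Set (Set V) :=
  {t | IsInducedPath G t a b ∧ t \ {a} ⊆ A}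

def inducedCyclesIn (G : SimpleGraph V) (A : Set V) : Set (Set V) :=
  {s | IsInducedCycle G s ∧ s ⊆ A}

lemma inducedPathsIn_subset (A : Set V) (a b : V) :
    inducedPathsIn G A a b ⊆ {{a, b}} ∪ ⋃ u ∈ A ∩ G.neighborSet a,
      insert a '' inducedPathsIn G (A \ insert a (G.neighborSet a)) u b := by
  rintro t ⟨ht, htA⟩
  by_cases hab : t = {a, b}
  · exact .inl hab
  obtain ⟨u, hu, hpath⟩ := ht.exists_isInducedPath_sdiff_singleton hab
  have hut : u ∈ t ∩ G.neighborSet a := hu ▸ rfl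
  refine .inr (Set.mem_biUnion ⟨htA ⟨hut.1, hut.2.ne.symm⟩, hut.2⟩
    ⟨t \ {a}, ⟨hpath, ?_⟩, by rw [Set.insert_sdiff_singleton, Set.insert_eq_of_mem ht.left_mem]⟩)
  rintro x ⟨⟨hx, hxa⟩, hxu⟩
  refine ⟨htA ⟨hx, hxa⟩, ?_⟩
  rintro (rfl | hax)
  · exact hxa rfl
  · exact hxu (hu ▸ ⟨hx, hax⟩ : x ∈ ({u} : Set V))

lemma inducedCyclesIn_subset (A : Set V) (v : V) :
    inducedCyclesIn G A ⊆ inducedCyclesIn G (A \ {v}) ∪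
      ⋃ u ∈ A ∩ G.neighborSet v, ⋃ u' ∈ A ∩ G.neighborSet v,
        insert v '' inducedPathsIn G (insert u' (A \ insert v (G.neighborSet v))) u u' := by
  rintro s ⟨hs, hsA⟩
  by_cases hv : v ∈ s
  · obtain ⟨u, u', hN, hpath⟩ := hs.exists_isInducedPath_sdiff_singleton hv
    have hmem : ∀ {x}, x ∈ s ∩ G.neighborSet v ↔ x = u ∨ x = u' := by simp [hN]
    have hu : u ∈ s ∩ G.neighborSet v := hmem.2 (.inl rfl)
    have hu' : u' ∈ s ∩ G.neighborSet v := hmem.2 (.inr rfl)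
    refine .inr (Set.mem_biUnion ⟨hsA hu.1, hu.2⟩ (Set.mem_biUnion ⟨hsA hu'.1, hu'.2⟩
      ⟨s \ {v}, ⟨hpath, ?_⟩, by rw [Set.insert_sdiff_singleton, Set.insert_eq_of_mem hv]⟩))
    rintro x ⟨⟨hx, hxv⟩, hxu⟩
    by_cases hxu' : x = u'
    · exact .inl hxu'
    refine .inr ⟨hsA hx, ?_⟩
    rintro (rfl | hvx)
    · exact hxv rfl
    · exact (hmem.1 ⟨hx, hvx⟩).elim hxu hxu'
  · exact .inl ⟨hs, fun x hx => ⟨hsA hx, fun hxv => hv (hxv ▸ hx)⟩⟩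

lemma inducedCyclesIn_empty : inducedCyclesIn G ∅ = ∅ :=
  Set.eq_empty_of_forall_notMem fun s ⟨hs, hs0⟩ => by
    simpa [Set.subset_empty_iff.1 hs0] using hs.2.1

variable [Finite V]

theorem ncard_inducedPathsIn_le (A : Set V) (a b : V) :
    ((inducedPathsIn G A a b).ncard : ℝ) ≤ 4 * cubeRootThree ^ A.ncard - 1 := by
  induction hm : A.ncard using Nat.strong_induction_on generalizing A a b with
  | _ m ih =>
  have hsize : (A \ insert a (G.neighborSet a)).ncard + (A ∩ G.neighborSet a).ncard ≤ m := by
    have := Set.ncard_le_ncard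
      (Set.inter_subset_inter_right A (Set.subset_insert a (G.neighborSet a)))
    have := Set.ncard_inter_add_ncard_sdiff_eq_ncard A (insert a (G.neighborSet a))
    omega
  set N := A ∩ G.neighborSet a
  set A' := A \ insert a (G.neighborSet a)
  obtain ⟨k, rfl⟩ : ∃ k, m = N.ncard + k := ⟨m - N.ncard, by omega⟩
  have hrec : ∀ u ∈ N,
      ((insert a '' inducedPathsIn G A' u b).ncard : ℝ) ≤ 4 * cubeRootThree ^ k - 1 := by
    intro u hu
    have hN : 0 < N.ncard := (Set.ncard_pos (Set.toFinite N)).2 ⟨u, hu⟩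
    calc ((insert a '' inducedPathsIn G A' u b).ncard : ℝ)
        ≤ (inducedPathsIn G A' u b).ncard := by exact_mod_cast Set.ncard_image_le
      _ ≤ 4 * cubeRootThree ^ A'.ncard - 1 := ih _ (by omega) A' u b rfl
      _ ≤ 4 * cubeRootThree ^ k - 1 := by
          linarith [cubeRootThree_pow_mono (show A'.ncard ≤ k by omega)]
  calc ((inducedPathsIn G A a b).ncard : ℝ)
      ≤ ({{a, b}} : Set (Set V)).ncard +
          (⋃ u ∈ N, insert a '' inducedPathsIn G A' u b).ncard :=
        ncard_le_of_subset_union (inducedPathsIn_subset A a b)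
    _ ≤ 1 + N.ncard * (4 * cubeRootThree ^ k - 1) := by
        rw [Set.ncard_singleton, Nat.cast_one]
        exact add_le_add_right (ncard_biUnion_le_mul (Set.toFinite _) hrec) 1
    _ ≤ 4 * cubeRootThree ^ (N.ncard + k) - 1 := inducedPaths_recursion_bound _ _

lemma ncard_image_inducedPathsIn_le (g : Set V → Set V) (A : Set V) (a b : V) :
    ((g '' inducedPathsIn G A a b).ncard : ℝ) ≤ 4 * cubeRootThree ^ A.ncard - 1 :=
  (Nat.cast_le.2 Set.ncard_image_le).trans (ncard_inducedPathsIn_le A a b)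

theorem ncard_inducedCyclesIn_le (A : Set V) :
    ((inducedCyclesIn G A).ncard : ℝ) ≤ 128 * (cubeRootThree ^ A.ncard - 1) := by
  induction hm : A.ncard using Nat.strong_induction_on generalizing A with
  | _ m ih =>
  rcases A.eq_empty_or_nonempty with rfl | ⟨v, hv⟩
  · simp [inducedCyclesIn_empty, ← hm]
  have hsize :
      (A \ insert v (G.neighborSet v)).ncard + (A ∩ G.neighborSet v).ncard + 1 ≤ m := by
    have := Set.ncard_inter_add_ncard_sdiff_eq_ncard A (insert v (G.neighborSet v))
    rw [Set.inter_insert_of_mem hv, Set.ncard_insert_of_notMem fun h => G.irrefl h.2] at this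
    omega
  set N := A ∩ G.neighborSet v
  set A' := A \ insert v (G.neighborSet v)
  obtain ⟨k, rfl⟩ : ∃ k, m = N.ncard + k + 1 := ⟨m - N.ncard - 1, by omega⟩
  have hpaths : ∀ u ∈ N, ∀ u' ∈ N,
      ((insert v '' inducedPathsIn G (insert u' A') u u').ncard : ℝ) ≤
        4 * cubeRootThree ^ (k + 1) := fun u _ u' _ => by
    have := cubeRootThree_pow_mono
      (show (insert u' A').ncard ≤ k + 1 from (Set.ncard_insert_le _ _).trans (by omega))
    linarith [ncard_image_inducedPathsIn_le (G := G) (insert v) (insert u' A') u u']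
  have hrest : ((inducedCyclesIn G (A \ {v})).ncard : ℝ) ≤
      128 * (cubeRootThree ^ (N.ncard + k) - 1) :=
    ih _ (by omega) _ (by rw [Set.ncard_sdiff_singleton_of_mem hv, hm]; omega)
  calc ((inducedCyclesIn G A).ncard : ℝ)
      ≤ (inducedCyclesIn G (A \ {v})).ncard + (⋃ u ∈ N, ⋃ u' ∈ N,
          insert v '' inducedPathsIn G (insert u' A') u u').ncard :=
        ncard_le_of_subset_union (inducedCyclesIn_subset A v)
    _ ≤ 128 * (cubeRootThree ^ (N.ncard + k) - 1) +
          N.ncard * (N.ncard * (4 * cubeRootThree ^ (k + 1))) :=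
        add_le_add hrest (ncard_biUnion_le_mul (Set.toFinite _) fun u hu =>
          ncard_biUnion_le_mul (Set.toFinite _) (hpaths u hu))
    _ ≤ 128 * (cubeRootThree ^ (N.ncard + k + 1) - 1) := inducedCycles_recursion_bound _ _

theorem numInducedCycles_le (G : SimpleGraph V) :
    (numInducedCycles G : ℝ) ≤ 128 * cubeRootThree ^ Nat.card V := by
  have h := ncard_inducedCyclesIn_le (G := G) Set.univ
  rw [Set.ncard_univ] at h
  have : inducedCyclesIn G Set.univ = {s | IsInducedCycle G s} := by simp [inducedCyclesIn]
  rw [numInducedCycles, ← this]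
  linarith

lemma isInducedCycle_range {W : Type*} {H : SimpleGraph W} {k : ℕ} (hk : 3 ≤ k)
    (f : cycleGraph k ↪g H) : IsInducedCycle H (Set.range f) := by
  obtain ⟨k, rfl⟩ : ∃ j, k = j + 3 := ⟨k - 3, by omega⟩
  refine ⟨Set.finite_range f, ?_, ?_, ?_⟩
  · rw [Set.ncard_range_of_injective f.injective, Nat.card_eq_fintype_card, Fintype.card_fin]
    omega
  · let φ : cycleGraph (k + 3) →g H.induce (Set.range f) :=
      ⟨fun i => ⟨f i, i, rfl⟩, fun h => f.map_rel_iff.2 h⟩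
    exact cycleGraph_connected.map φ (by rintro ⟨_, i, rfl⟩; exact ⟨i, rfl⟩)
  · rintro _ ⟨i, rfl⟩
    have : {w | w ∈ Set.range f ∧ H.Adj (f i) w} = f '' (cycleGraph (k + 3)).neighborSet i := by
      ext w
      constructor
      · rintro ⟨⟨j, rfl⟩, h⟩
        exact ⟨j, f.map_rel_iff.1 h, rfl⟩
      · rintro ⟨j, h, rfl⟩
        exact ⟨⟨j, rfl⟩, f.map_rel_iff.2 h⟩
    rw [this, Set.ncard_image_of_injective _ f.injective, ← coe_neighborFinset,
      Set.ncard_coe_finset, card_neighborFinset_eq_degree, cycleGraph_degree_three_le]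

/-- The `k`-cycle with every vertex replaced by an independent set of size 3. -/
abbrev cycleBlowup (k : ℕ) : SimpleGraph (Fin k × Fin 3) := (cycleGraph k).comap Prod.fst

def cycleBlowup.transversal {k : ℕ} (c : Fin k → Fin 3) : cycleGraph k ↪g cycleBlowup k where
  toFun i := (i, c i)
  inj' _ _ h := congrArg Prod.fst h
  map_rel_iff' := Iff.rfl

lemma three_pow_le_numInducedCycles {k : ℕ} (hk : 3 ≤ k) (f : cycleBlowup k ↪g G) :
    3 ^ k ≤ numInducedCycles G := by
  have hinj : Function.Injective fun c => Set.range (f.comp (cycleBlowup.transversal c)) := by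
    intro c c' h
    replace h : Set.range (f.comp (cycleBlowup.transversal c)) =
      Set.range (f.comp (cycleBlowup.transversal c')) := h
    funext i
    obtain ⟨j, hj⟩ : f (i, c i) ∈ Set.range (f.comp (cycleBlowup.transversal c')) :=
      h ▸ ⟨i, rfl⟩
    obtain ⟨rfl, hc⟩ := Prod.ext_iff.1 (f.injective hj)
    exact hc.symm
  calc 3 ^ k = Nat.card (Fin k → Fin 3) := by simp
    _ = (Set.range fun c => Set.range (f.comp (cycleBlowup.transversal c))).ncard :=
        (Set.ncard_range_of_injective hinj).symm
    _ ≤ numInducedCycles G :=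
        Set.ncard_le_ncard (by rintro _ ⟨c, rfl⟩; exact isInducedCycle_range hk _)

lemma bddAbove_numInducedCycles (n : ℕ) :
    BddAbove {k | ∃ G : SimpleGraph (Fin n), numInducedCycles G = k} :=
  (Set.finite_range numInducedCycles).bddAbove

lemma three_pow_le_maxInducedCycles_s16 {n k : ℕ} (hk : 3 ≤ k) (hkn : 3 * k ≤ n) :
    3 ^ k ≤ maxInducedCycles n := by
  obtain ⟨e⟩ : Nonempty (Fin k × Fin 3 ↪ Fin n) :=
    Function.Embedding.nonempty_of_card_le (by simpa [mul_comm] using hkn)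
  exact (three_pow_le_numInducedCycles hk (Embedding.map e _)).trans
    (le_csSup (bddAbove_numInducedCycles n) ⟨_, rfl⟩)

lemma maxInducedCycles_le (n : ℕ) : (maxInducedCycles n : ℝ) ≤ 128 * cubeRootThree ^ n := by
  obtain ⟨G, hG⟩ := Nat.sSup_mem (s := {k | ∃ G : SimpleGraph (Fin n), numInducedCycles G = k})
    ⟨_, ⊥, rfl⟩ (bddAbove_numInducedCycles n)
  rw [maxInducedCycles, ← hG]
  simpa using numInducedCycles_le G

/-- `m(n) = Θ(3^{n/3})`. -/
theorem maxInducedCycles_theta :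
    ∃ (c C : ℝ) (n₀ : ℕ), 0 < c ∧ 0 < C ∧
      ∀ n : ℕ, n₀ ≤ n →
        c * (3 : ℝ) ^ ((n : ℝ) / 3) ≤ (maxInducedCycles n : ℝ) ∧
        (maxInducedCycles n : ℝ) ≤ C * (3 : ℝ) ^ ((n : ℝ) / 3) := by
  refine ⟨1 / 3, 128, 9, by norm_num, by norm_num, fun n hn => ?_⟩
  rw [rpow_div_three_eq_cubeRootThree_pow]
  refine ⟨?_, maxInducedCycles_le n⟩
  have : (3 : ℝ) ^ (n / 3) ≤ maxInducedCycles n := by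
    exact_mod_cast three_pow_le_maxInducedCycles_s16 (by omega) (Nat.mul_div_le n 3)
  linarith [cubeRootThree_pow_le n]

end ExtremalInducedCycles
end
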